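/- Let X be a simplicial set, G a simplicial group, and τ : X_{>0} → G a twisting function. Let n ≥ 0, 0 ≤ p ≤ n, x ∈ X_n, i ∈ S_{n+1}, and set (j, q) = Φ(i, p+1). Then hatSz_i(s_p x) = s_q(hatSz_j x) in (X ×_τ G)_{n+1}. -/

import Mathlib

open CategoryTheory Simplicial

/-- `memS n l i` means `i ∈ S_{n,l}`: a sequence of length `l` with
`0 ≤ i_s ≤ n - s` for `1 ≤ s ≤ l` (here `i.getD t 0` is the entry `i_{t+1}`). -/
def memS (n l : ℕ) (i : List ℕ) : Prop :=
  i.length = l ∧ ∀ t < l, i.getD t 0 + t + 1 ≤ n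

/-- The ordered set remaining from `{0, …, n}` after performing the first `r`
removal steps prescribed by `i`: at each step the element at (0-indexed)
position `i_r + 1` of the remaining set is removed. -/
def restAfter (n : ℕ) (i : List ℕ) (r : ℕ) : List ℕ :=
  (i.take r).foldl (fun L a => L.eraseIdx (a + 1)) (List.range (n + 1))

/-- The ordered set remaining from `{0, …, n}` after the whole removal
procedure prescribed by `i`. -/
def restList (n : ℕ) (i : List ℕ) : List ℕ := restAfter n i i.length

/-- The element `e_{r+1}` removed at (0-indexed) step `r` of the removal
procedure on `{0, …, n}` prescribed by `i`. -/
def elemRemoved (n : ℕ) (i : List ℕ) (r : ℕ) : ℕ :=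
  (restAfter n i r).getD (i.getD r 0 + 1) 0

/-- The component `α_s` of `Ψ_p(i)`, for the interval `(a, b) = (p_{s-1}, p_s)`:
the set of (0-indexed) steps at which an element strictly between `a` and `b`
is removed. -/
def psiAlpha (n : ℕ) (i : List ℕ) (a b : ℕ) : Finset ℕ :=
  (Finset.range i.length).filter
    (fun r => a < elemRemoved n i r ∧ elemRemoved n i r < b)

/-- The component `j_s` of `Ψ_p(i)`, for the interval `(a, b) = (p_{s-1}, p_s)`:
its `u`-th entry is `w - 1` where the `u`-th element of `(a, b)` to be removed
is, at the moment of its removal, the `w`-th smallest element of `(a, b)` still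
present. -/
def psiJ (n : ℕ) (i : List ℕ) (a b : ℕ) : List ℕ :=
  ((List.range i.length).filter
      (fun r => decide (a < elemRemoved n i r ∧ elemRemoved n i r < b))).map
    (fun r => ((restAfter n i r).filter
      (fun y => decide (a < y ∧ y < elemRemoved n i r))).length)

/-- `α` is a `(q_0, …, q_{k-1})`-shuffle: an ordered partition of
`{0, …, q_0 + ⋯ + q_{k-1} - 1}` with `|α_s| = q_s`. -/
def IsShuffleF {k : ℕ} (q : Fin k → ℕ) (α : Fin k → Finset ℕ) : Prop :=
  (∀ s, (α s).card = q s) ∧ (∀ s t, s ≠ t → Disjoint (α s) (α t)) ∧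
    Finset.univ.biUnion α = Finset.range (∑ s, q s)

/-- The sign exponent `(α)` of a shuffle: the number of pairs `(a, b)` with
`a ∈ α_s`, `b ∈ α_t`, `s < t` and `a > b`. -/
def shuffleExpN (k : ℕ) (α : ℕ → Finset ℕ) : ℕ :=
  ∑ s ∈ Finset.range k, ∑ t ∈ Finset.range k,
    if s < t then ∑ a ∈ α s, ((α t).filter (fun b => b < a)).card else 0

/-- Vertex map of the derived operator. -/
def derivedFun (f : ℕ → ℕ) : ℕ → ℕ := fun t => if t = 0 then 0 else f (t - 1) + 1

/-- Vertex map of the face map `δ_j`. -/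
def deltaFun (j : ℕ) : ℕ → ℕ := fun t => if t < j then t else t + 1

/-- Vertex map of the degeneracy map `σ_j`. -/
def sigmaFun (j : ℕ) : ℕ → ℕ := fun t => if t ≤ j then t else t - 1

/-- Vertex map of the Szczarba operator `D_i^k`. -/
def DFun : List ℕ → ℕ → ℕ → ℕ := fun x x_1 => match x, x_1 with
  | [], _ => id
  | (i1 :: i'), k =>
    if k < i1 then deltaFun (i1 - k) ∘ sigmaFun 0 ∘ derivedFun (DFun i' k)
    else if k = i1 then derivedFun (DFun i' k)
    else sigmaFun 0 ∘ derivedFun (DFun i' (k - 1))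

/-- The morphism `[b] ⟶ [a]` in the simplex category whose vertex map is (the
monotone clamped version of) `f`.  When `f` is monotone and maps `[b]` into `[a]`
this is exactly the morphism with vertex map `f`. -/
def mkHomF (a b : ℕ) (f : ℕ → ℕ) : (SimplexCategory.mk b ⟶ SimplexCategory.mk a) :=
  SimplexCategory.mkHom
    { toFun := fun t => ⟨min ((Finset.range (t.1 + 1)).sup f) a,
        Nat.lt_succ_of_le (min_le_right _ _)⟩
      monotone' := fun u v huv => by
        simp only [Fin.mk_le_mk]
        exact min_le_min
          (Finset.sup_mono (Finset.range_subset_range.mpr (Nat.succ_le_succ huv))) le_rfl }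

/-- The natural simplicial operator `X_a → X_b` with vertex map `f : [b] → [a]`. -/
def simpOp (X : SSet) (f : ℕ → ℕ) (a b : ℕ) (x : X _⦋a⦌) : X _⦋b⦌ :=
  X.map (mkHomF a b f).op x

/-- The natural simplicial operator `G_a → G_b` with vertex map `f : [b] → [a]`,
for a simplicial group `G`. -/
def grpOp (G : CategoryTheory.SimplicialObject GrpCat) (f : ℕ → ℕ) (a b : ℕ)
    (g : G _⦋a⦌) : G _⦋b⦌ :=
  (G.map (mkHomF a b f).op) g

/-- A twisting function `τ : X_{>0} → G`. -/
structure TwistingFn (X : SSet) (G : CategoryTheory.SimplicialObject GrpCat) where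
  map : ∀ n : ℕ, X _⦋n + 1⦌ → G _⦋n⦌
  d0 : ∀ (n : ℕ) (x : X _⦋n + 2⦌),
    grpOp G (deltaFun 0) (n + 1) n (map (n + 1) x)
      = (map n (simpOp X (deltaFun 0) (n + 2) (n + 1) x))⁻¹
        * map n (simpOp X (deltaFun 1) (n + 2) (n + 1) x)
  dk : ∀ (n k : ℕ) (x : X _⦋n + 2⦌), 0 < k → k < n + 2 →
    grpOp G (deltaFun k) (n + 1) n (map (n + 1) x)
      = map n (simpOp X (deltaFun (k + 1)) (n + 2) (n + 1) x)
  sk : ∀ (n k : ℕ) (x : X _⦋n + 1⦌), k < n + 1 →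
    grpOp G (sigmaFun k) n (n + 1) (map n x)
      = map (n + 1) (simpOp X (sigmaFun (k + 1)) (n + 1) (n + 2) x)
  s0 : ∀ (n : ℕ) (x : X _⦋n⦌), map n (simpOp X (sigmaFun 0) n (n + 1) x) = 1

/-- Szczarba's operator `Sz_i : X_{n+1} → G_n`. -/
def Sz {X : SSet} {G : CategoryTheory.SimplicialObject GrpCat} (τ : TwistingFn X G)
    (n : ℕ) (i : List ℕ) (x : X _⦋n + 1⦌) : G _⦋n⦌ :=
  ((List.range (n + 1)).map (fun r =>
    grpOp G (DFun i r) (n - r) n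
      ((τ.map (n - r) (simpOp X (fun t => t + r) (n + 1) ((n - r) + 1) x))⁻¹))).prod

/-- The group component of the operator `hatSz_i : X_n → X_n × G_n`. -/
def hatSzG {X : SSet} {G : CategoryTheory.SimplicialObject GrpCat} (τ : TwistingFn X G)
    (n : ℕ) (i : List ℕ) (x : X _⦋n⦌) : G _⦋n⦌ :=
  ((List.range n).map (fun r =>
    grpOp G (DFun i (r + 1)) (n - (r + 1)) n
      ((τ.map (n - (r + 1)) (simpOp X (fun t => t + r) n ((n - (r + 1)) + 1) x))⁻¹))).prod

/-- Szczarba's operator `hatSz_i : X_n → (X ×_τ G)_n = X_n × G_n`. -/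
def hatSz {X : SSet} {G : CategoryTheory.SimplicialObject GrpCat} (τ : TwistingFn X G)
    (n : ℕ) (i : List ℕ) (x : X _⦋n⦌) : X _⦋n⦌ × G _⦋n⦌ :=
  (simpOp X (DFun i 0) n n x, hatSzG τ n i x)

/-- The `r`-fold iterate of the zeroth face map of the twisted Cartesian
product `X ×_τ G`. -/
def twD0pow {X : SSet} {G : CategoryTheory.SimplicialObject GrpCat} (τ : TwistingFn X G) :
    (r : ℕ) → (m : ℕ) → X _⦋m + r⦌ × (G _⦋m + r⦌ : Type _) → X _⦋m⦌ × (G _⦋m⦌ : Type _) := fun x x_1 x_2 =>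
    match x, x_1, x_2 with
  | 0, _, z => z
  | r + 1, m, z =>
      twD0pow τ r m
        (simpOp X (deltaFun 0) (m + r + 1) (m + r) z.1,
         τ.map (m + r) z.1 * grpOp G (deltaFun 0) (m + r + 1) (m + r) z.2)

/-- Vertex map of the iterated degeneracy `s_B` on a finite set `B`. -/
def degenFun (B : Finset ℕ) : ℕ → ℕ := fun t => t - (B.filter (fun b => b < t)).card

/-- The map `Φ : S_n × [n] → S_{n-1} × [n-1]`. -/
def Phi : List ℕ → ℕ → List ℕ × ℕ := fun x x_1 => match x, x_1 with
  | [], _ => ([], 0)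
  | (i1 :: i'), p =>
    if p < i1 then ((i1 - 1) :: (Phi i' p).1, (Phi i' p).2 + 1)
    else if p = i1 ∨ p = i1 + 1 then (i', 0)
    else (i1 :: (Phi i' (p - 1)).1, (Phi i' (p - 1)).2 + 1)

/-!
With `(j, q) = Φ(i, p+1)`, the operators satisfy `D_i^k s_{p-k} = s_q D_j^k` for `k ≤ p` and
`D_i^k = s_q D_j^{k-1}` for `k > p + 1`; on vertex maps both follow by induction on `i`, one case
per clause defining `Φ`. The first component of `hatSz_i (s_p x)` is the case `k = 0`. The group
component is the product over `r` of the factors `D_i^{r+1} σ(∂_0^r s_p x)`. For `r < p` we have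
`∂_0^r s_p x = s_{p-r} ∂_0^r x`, and `σ` commutes with degeneracies, so the factor is `s_q` of the
`r`-th factor for `j`. For `r = p`, `∂_0^p s_p x = s_0 ∂_0^p x` and `τ ∘ s_0 = 1` kill the factor.
For `r > p`, `∂_0^r s_p x = ∂_0^{r-1} x`, so the remaining factors are those for `j` shifted by one.
-/

@[simp] lemma derivedFun_zero (f : ℕ → ℕ) : derivedFun f 0 = 0 := rfl

@[simp] lemma derivedFun_succ (f : ℕ → ℕ) (t : ℕ) : derivedFun f (t + 1) = f t + 1 := rfl

@[simp] lemma sigmaFun_apply_zero (j : ℕ) : sigmaFun j 0 = 0 := by simp [sigmaFun]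

@[simp] lemma sigmaFun_zero_succ (t : ℕ) : sigmaFun 0 (t + 1) = t := by simp [sigmaFun]

lemma sigmaFun_succ_succ (q t : ℕ) : sigmaFun (q + 1) (t + 1) = sigmaFun q t + 1 := by
  simp only [sigmaFun]; split_ifs <;> omega

lemma sigmaFun_le_of_le {q n t : ℕ} (hq : q ≤ n) (ht : t ≤ n + 1) : sigmaFun q t ≤ n := by
  simp only [sigmaFun]; split_ifs <;> omega

lemma sigmaFun_mono (j : ℕ) : Monotone (sigmaFun j) := by
  intro a b h; simp only [sigmaFun]; split_ifs <;> omega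

lemma deltaFun_mono (j : ℕ) : Monotone (deltaFun j) := by
  intro a b h; simp only [deltaFun]; split_ifs <;> omega

lemma derivedFun_mono {f : ℕ → ℕ} (hf : Monotone f) : Monotone (derivedFun f) := by
  rintro (_ | a) (_ | b) h
  · rfl
  · exact Nat.zero_le _
  · omega
  · simpa using hf (Nat.le_of_succ_le_succ h)

lemma DFun_mono (i : List ℕ) (k : ℕ) : Monotone (DFun i k) := by
  induction i generalizing k with
  | nil => exact monotone_id
  | cons i1 i' ih =>
    simp only [DFun]
    split_ifs
    · exact (deltaFun_mono _).comp ((sigmaFun_mono _).comp (derivedFun_mono (ih k)))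
    · exact derivedFun_mono (ih k)
    · exact (sigmaFun_mono _).comp (derivedFun_mono (ih (k - 1)))

@[simp] lemma DFun_apply_zero (i : List ℕ) (k : ℕ) : DFun i k 0 = 0 := by
  cases i with
  | nil => rfl
  | cons i1 i' =>
    simp only [DFun]
    split_ifs <;> simp [deltaFun, *]

lemma memS_nil {N : ℕ} (h : memS N N []) : N = 0 := by
  simpa using h.1.symm

lemma memS_cons {N i1 : ℕ} {i' : List ℕ} (h : memS N N (i1 :: i')) :
    ∃ N', N = N' + 1 ∧ i1 ≤ N' ∧ memS N' N' i' := by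
  obtain ⟨hlen, hval⟩ := h
  obtain rfl : N = i'.length + 1 := by simpa using hlen.symm
  refine ⟨i'.length, rfl, by simpa using hval 0 (by omega), rfl, fun t ht => ?_⟩
  have := hval (t + 1) (by omega)
  rw [List.getD_cons_succ] at this
  omega

lemma DFun_le_sub {N k t : ℕ} {i : List ℕ} (hi : memS N N i) (hk : k ≤ N) (ht : t ≤ N) :
    DFun i k t ≤ N - k := by
  induction i generalizing k N t with
  | nil =>
    obtain rfl := memS_nil hi
    simpa [DFun] using ht
  | cons i1 i' ih =>
    obtain ⟨N, rfl, hi1, hi'⟩ := memS_cons hi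
    rcases t with _ | t
    · simp
    simp only [DFun]
    split_ifs with h1 h2
    · have := ih hi' (k := k) (t := t) (by omega) (by omega)
      simp only [Function.comp_apply, derivedFun_succ, sigmaFun_zero_succ, deltaFun]
      split_ifs <;> omega
    · have := ih hi' (k := k) (t := t) (by omega) (by omega)
      simp only [derivedFun_succ]; omega
    · have := ih hi' (k := k - 1) (t := t) (by omega) (by omega)
      simp only [Function.comp_apply, derivedFun_succ, sigmaFun_zero_succ]; omega

lemma Phi_snd_lt {N P : ℕ} {i : List ℕ} (hi : memS N N i) (hP : 1 ≤ P) (hPN : P ≤ N) :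
    (Phi i P).2 < N := by
  induction i generalizing N P with
  | nil => have := memS_nil hi; omega
  | cons i1 i' ih =>
    obtain ⟨N, rfl, hi1, hi'⟩ := memS_cons hi
    simp only [Phi]
    split_ifs with h1 h2
    · have := ih hi' hP (by omega); omega
    · omega
    · have := ih hi' (P := P - 1) (by omega) (by omega); omega

lemma DFun_Phi_sigmaFun_of_lt {N P k : ℕ} {i : List ℕ} (hi : memS N N i) (hP : 1 ≤ P)
    (hPN : P ≤ N) (hk : k < P) (t : ℕ) :
    DFun (Phi i P).1 k (sigmaFun (Phi i P).2 t) = sigmaFun (P - 1 - k) (DFun i k t) := by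
  induction i generalizing N P k t with
  | nil => have := memS_nil hi; omega
  | cons i1 i' ih =>
    obtain ⟨N, rfl, hi1, hi'⟩ := memS_cons hi
    rcases t with _ | t
    · simp
    simp only [Phi]
    split_ifs with h1 h2
    · simp only [DFun, if_pos (show k < i1 by omega), if_pos (show k < i1 - 1 by omega),
        Function.comp_apply, derivedFun_succ, sigmaFun_zero_succ, sigmaFun_succ_succ,
        ih hi' hP (by omega) hk t]
      generalize DFun i' k t = v
      simp only [sigmaFun, deltaFun]; split_ifs <;> omega
    · rcases lt_or_eq_of_le (show k ≤ i1 by omega) with hki | rfl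
      · simp only [DFun, if_pos hki, Function.comp_apply, derivedFun_succ, sigmaFun_zero_succ]
        generalize DFun i' k t = v
        simp only [sigmaFun, deltaFun]; split_ifs <;> omega
      · simp [DFun, show P - 1 - k = 0 by omega]
    · have ih' := fun k hk => ih hi' (P := P - 1) (k := k) (by omega) (by omega) hk
      rcases lt_trichotomy k i1 with hki | rfl | hki
      · simp only [DFun, if_pos hki, Function.comp_apply, derivedFun_succ,
          sigmaFun_zero_succ, sigmaFun_succ_succ, ih' k (by omega),
          show P - 1 - 1 - k = P - 2 - k by omega]
        generalize DFun i' k t = v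
        simp only [sigmaFun, deltaFun]; split_ifs <;> omega
      · simp only [DFun, lt_irrefl, if_false, if_true, derivedFun_succ,
          sigmaFun_succ_succ, ih' k (by omega),
          show P - 1 - 1 - k = P - 2 - k by omega, show P - 1 - k = P - 2 - k + 1 by omega]
      · simp only [DFun, if_neg (show ¬ k < i1 by omega), if_neg (show ¬ k = i1 by omega),
          Function.comp_apply, derivedFun_succ, sigmaFun_zero_succ, sigmaFun_succ_succ,
          ih' (k - 1) (by omega), show P - 1 - 1 - (k - 1) = P - 1 - k by omega]

lemma DFun_Phi_sigmaFun_of_gt {N P k : ℕ} {i : List ℕ} (hi : memS N N i) (hP : 1 ≤ P)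
    (hPN : P ≤ N) (hk : P < k) (t : ℕ) :
    DFun (Phi i P).1 (k - 1) (sigmaFun (Phi i P).2 t) = DFun i k t := by
  induction i generalizing N P k t with
  | nil => have := memS_nil hi; omega
  | cons i1 i' ih =>
    obtain ⟨N, rfl, hi1, hi'⟩ := memS_cons hi
    rcases t with _ | t
    · simp
    simp only [Phi]
    split_ifs with h1 h2
    · have ih' := ih hi' hP (by omega) hk t
      rcases lt_trichotomy k i1 with hki | rfl | hki
      · simp only [DFun, if_pos hki, if_pos (show k - 1 < i1 - 1 by omega),
          Function.comp_apply, derivedFun_succ, sigmaFun_zero_succ, sigmaFun_succ_succ,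
          show i1 - 1 - (k - 1) = i1 - k by omega, ih']
      · simp only [DFun, lt_irrefl, if_false, if_true, lt_irrefl, derivedFun_succ,
          sigmaFun_succ_succ, ih']
      · simp only [DFun, if_neg (show ¬ k < i1 by omega), if_neg (show ¬ k = i1 by omega),
          if_neg (show ¬ k - 1 < i1 - 1 by omega), if_neg (show ¬ k - 1 = i1 - 1 by omega),
          Function.comp_apply, derivedFun_succ, sigmaFun_zero_succ, sigmaFun_succ_succ,
          ← ih hi' hP (by omega) (show P < k - 1 by omega) t, show k - 1 - 1 = k - 2 by omega]
    · simp only [DFun, if_neg (show ¬ k < i1 by omega), if_neg (show ¬ k = i1 by omega),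
        Function.comp_apply, derivedFun_succ, sigmaFun_zero_succ]
    · simp only [DFun, if_neg (show ¬ k < i1 by omega), if_neg (show ¬ k = i1 by omega),
        if_neg (show ¬ k - 1 < i1 by omega), if_neg (show ¬ k - 1 = i1 by omega),
        Function.comp_apply, derivedFun_succ, sigmaFun_zero_succ, sigmaFun_succ_succ,
        ← ih hi' (P := P - 1) (k := k - 1) (by omega) (by omega) (by omega) t,
        show k - 1 - 1 = k - 2 by omega]

lemma mkHomF_apply {f : ℕ → ℕ} (hf : Monotone f) (a b : ℕ) (t : Fin (b + 1)) :
    ((mkHomF a b f).toOrderHom t : ℕ) = min (f t) a := by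
  have hsup : (Finset.range (t + 1)).sup f = f t :=
    le_antisymm (Finset.sup_le fun u hu => hf (Nat.lt_succ_iff.mp (Finset.mem_range.mp hu)))
      (Finset.le_sup (Finset.mem_range_succ_iff.mpr le_rfl))
  exact congrArg (min · a) hsup

lemma mkHomF_congr {f g : ℕ → ℕ} (a b : ℕ) (h : ∀ t ≤ b, f t = g t) :
    mkHomF a b f = mkHomF a b g := by
  ext t : 4
  have ht : (t : ℕ) ≤ b := Nat.lt_succ_iff.mp t.2
  exact congrArg (min · a) (Finset.sup_congr rfl fun u hu =>
    h u ((Nat.lt_succ_iff.mp (Finset.mem_range.mp hu)).trans ht))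

lemma mkHomF_comp {f g : ℕ → ℕ} (a b c : ℕ) (hf : Monotone f) (hg : Monotone g)
    (hgb : ∀ t ≤ c, g t ≤ b) :
    mkHomF b c g ≫ mkHomF a b f = mkHomF a c (f ∘ g) := by
  ext t : 4
  have ht : (t : ℕ) ≤ c := Nat.lt_succ_iff.mp t.2
  change ((mkHomF a b f).toOrderHom ((mkHomF b c g).toOrderHom t) : ℕ) = _
  rw [mkHomF_apply hf, mkHomF_apply hg, min_eq_left (hgb t ht), mkHomF_apply (hf.comp hg)]
  rfl

section Operators

variable (X : SSet) (G : SimplicialObject GrpCat)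

lemma simpOp_congr {f g : ℕ → ℕ} {a b : ℕ} (h : ∀ t ≤ b, f t = g t) (x : X _⦋a⦌) :
    simpOp X f a b x = simpOp X g a b x := by
  rw [simpOp, simpOp, mkHomF_congr a b h]

lemma grpOp_congr {f g : ℕ → ℕ} {a b : ℕ} (h : ∀ t ≤ b, f t = g t) (x : G _⦋a⦌) :
    grpOp G f a b x = grpOp G g a b x := by
  rw [grpOp, grpOp, mkHomF_congr a b h]

lemma simpOp_simpOp {f g : ℕ → ℕ} {a b c : ℕ} (hf : Monotone f) (hg : Monotone g)
    (hgb : ∀ t ≤ c, g t ≤ b) (x : X _⦋a⦌) :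
    simpOp X g b c (simpOp X f a b x) = simpOp X (f ∘ g) a c x := by
  simp only [simpOp, ← mkHomF_comp a b c hf hg hgb, op_comp, Functor.map_comp_apply]

lemma grpOp_grpOp {f g : ℕ → ℕ} {a b c : ℕ} (hf : Monotone f) (hg : Monotone g)
    (hgb : ∀ t ≤ c, g t ≤ b) (x : G _⦋a⦌) :
    grpOp G g b c (grpOp G f a b x) = grpOp G (f ∘ g) a c x := by
  rw [grpOp, grpOp, grpOp, ← mkHomF_comp a b c hf hg hgb, op_comp, G.map_comp]
  rfl

lemma simpOp_simpOp_comm {f g f' g' : ℕ → ℕ} {a b b' c : ℕ} (hf : Monotone f)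
    (hg : Monotone g) (hf' : Monotone f') (hg' : Monotone g') (hgb : ∀ t ≤ c, g t ≤ b)
    (hgb' : ∀ t ≤ c, g' t ≤ b') (h : ∀ t ≤ c, f (g t) = f' (g' t)) (x : X _⦋a⦌) :
    simpOp X g b c (simpOp X f a b x) = simpOp X g' b' c (simpOp X f' a b' x) := by
  rw [simpOp_simpOp X hf hg hgb, simpOp_simpOp X hf' hg' hgb']
  exact simpOp_congr X h x

lemma grpOp_grpOp_comm {f g f' g' : ℕ → ℕ} {a b b' c : ℕ} (hf : Monotone f)
    (hg : Monotone g) (hf' : Monotone f') (hg' : Monotone g') (hgb : ∀ t ≤ c, g t ≤ b)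
    (hgb' : ∀ t ≤ c, g' t ≤ b') (h : ∀ t ≤ c, f (g t) = f' (g' t)) (x : G _⦋a⦌) :
    grpOp G g b c (grpOp G f a b x) = grpOp G g' b' c (grpOp G f' a b' x) := by
  rw [grpOp_grpOp G hf hg hgb, grpOp_grpOp G hf' hg' hgb']
  exact grpOp_congr G h x

lemma grpOp_one (f : ℕ → ℕ) (a b : ℕ) : grpOp G f a b 1 = 1 := map_one _

lemma grpOp_inv (f : ℕ → ℕ) (a b : ℕ) (x : G _⦋a⦌) :
    grpOp G f a b x⁻¹ = (grpOp G f a b x)⁻¹ := map_inv _ _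

lemma grpOp_list_prod (f : ℕ → ℕ) (a b : ℕ) (l : List (G _⦋a⦌)) :
    grpOp G f a b l.prod = (l.map (grpOp G f a b)).prod := map_list_prod _ _

end Operators

def hatSzFactor {X : SSet} {G : SimplicialObject GrpCat} (τ : TwistingFn X G) (n : ℕ)
    (i : List ℕ) (x : X _⦋n⦌) (r : ℕ) : G _⦋n⦌ :=
  grpOp G (DFun i (r + 1)) (n - (r + 1)) n
    ((τ.map (n - (r + 1)) (simpOp X (fun t => t + r) n ((n - (r + 1)) + 1) x))⁻¹)

lemma hatSzG_eq_prod_hatSzFactor {X : SSet} {G : SimplicialObject GrpCat} (τ : TwistingFn X G)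
    (n : ℕ) (i : List ℕ) (x : X _⦋n⦌) :
    hatSzG τ n i x = ((List.range n).map (hatSzFactor τ n i x)).prod := rfl

lemma prod_range_succ_eq_of_skip {M : Type*} [Monoid M] {f g : ℕ → M} {p n : ℕ} (hp : p ≤ n)
    (hlt : ∀ r < p, f r = g r) (heq : f p = 1)
    (hgt : ∀ s, p ≤ s → s < n → f (s + 1) = g s) :
    ((List.range (n + 1)).map f).prod = ((List.range n).map g).prod := by
  induction n, hp using Nat.le_induction with
  | base =>
    rw [List.prod_range_succ, heq, mul_one]
    exact congrArg List.prod (List.map_congr_left fun r hr => hlt r (List.mem_range.mp hr))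
  | succ n hpn ih =>
    rw [List.prod_range_succ, List.prod_range_succ g, ih fun s h1 h2 => hgt s h1 (by omega),
      hgt n hpn n.lt_succ_self]

section Degeneracy

variable {X : SSet} {G : SimplicialObject GrpCat} (τ : TwistingFn X G) {n p : ℕ} {i : List ℕ}

lemma hatSz_fst_sigmaFun (hi : memS (n + 1) (n + 1) i) (hp : p ≤ n) (x : X _⦋n⦌) :
    (hatSz τ (n + 1) i (simpOp X (sigmaFun p) n (n + 1) x)).1
      = simpOp X (sigmaFun (Phi i (p + 1)).2) n (n + 1) (hatSz τ n (Phi i (p + 1)).1 x).1 := by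
  have hq := Phi_snd_lt hi (P := p + 1) (by omega) (by omega)
  refine simpOp_simpOp_comm X (sigmaFun_mono p) (DFun_mono i 0) (DFun_mono _ 0) (sigmaFun_mono _)
    (fun t ht => DFun_le_sub hi (Nat.zero_le _) ht) (fun t ht => sigmaFun_le_of_le (by omega) ht)
    (fun t _ => ?_) x
  simpa using (DFun_Phi_sigmaFun_of_lt hi (by omega) (by omega) (Nat.succ_pos p) t).symm

lemma hatSzFactor_sigmaFun_of_lt (hi : memS (n + 1) (n + 1) i) (hp : p ≤ n) {r : ℕ}
    (hr : r < p) (x : X _⦋n⦌) :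
    hatSzFactor τ (n + 1) i (simpOp X (sigmaFun p) n (n + 1) x) r
      = grpOp G (sigmaFun (Phi i (p + 1)).2) n (n + 1)
          (hatSzFactor τ n (Phi i (p + 1)).1 x r) := by
  have hq := Phi_snd_lt hi (P := p + 1) (by omega) (by omega)
  obtain ⟨m, rfl⟩ : ∃ m, n = m + r + 1 := ⟨n - r - 1, by omega⟩
  have hshift : simpOp X (· + r) (m + r + 1 + 1) (m + 1 + 1)
      (simpOp X (sigmaFun p) (m + r + 1) (m + r + 1 + 1) x)
      = simpOp X (sigmaFun (p - r)) (m + 1) (m + 1 + 1) (simpOp X (· + r) (m + r + 1) (m + 1) x) :=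
    simpOp_simpOp_comm X (sigmaFun_mono p) add_left_mono add_left_mono
      (sigmaFun_mono _) (fun t ht => by omega) (fun t ht => sigmaFun_le_of_le (by omega) ht)
      (fun t _ => by simp only [sigmaFun]; split_ifs <;> omega) x
  have hτ := τ.sk m (p - r - 1) (simpOp X (· + r) (m + r + 1) (m + 1) x) (by omega)
  rw [show p - r - 1 + 1 = p - r by omega] at hτ
  simp only [hatSzFactor]
  rw [show m + r + 1 + 1 - (r + 1) = m + 1 by omega, show m + r + 1 - (r + 1) = m by omega,
    hshift, ← hτ, ← grpOp_inv]
  refine grpOp_grpOp_comm G (sigmaFun_mono _) (DFun_mono i (r + 1)) (DFun_mono _ _)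
    (sigmaFun_mono _) (fun t ht => ?_) (fun t ht => sigmaFun_le_of_le (by omega) ht)
    (fun t _ => ?_) _
  · have := DFun_le_sub hi (k := r + 1) (by omega) ht; omega
  · rw [DFun_Phi_sigmaFun_of_lt hi (by omega) (by omega) (by omega),
      show p + 1 - 1 - (r + 1) = p - r - 1 by omega]

lemma hatSzFactor_sigmaFun_self (hp : p ≤ n) (x : X _⦋n⦌) :
    hatSzFactor τ (n + 1) i (simpOp X (sigmaFun p) n (n + 1) x) p = 1 := by
  obtain ⟨m, rfl⟩ : ∃ m, n = m + p := ⟨n - p, by omega⟩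
  have hshift : simpOp X (· + p) (m + p + 1) (m + 1) (simpOp X (sigmaFun p) (m + p) (m + p + 1) x)
      = simpOp X (sigmaFun 0) m (m + 1) (simpOp X (· + p) (m + p) m x) :=
    simpOp_simpOp_comm X (sigmaFun_mono p) add_left_mono add_left_mono (sigmaFun_mono _)
      (fun t ht => by omega) (fun t ht => sigmaFun_le_of_le (Nat.zero_le m) ht)
      (fun t _ => by simp only [sigmaFun]; split_ifs <;> omega) x
  simp only [hatSzFactor]
  rw [show m + p + 1 - (p + 1) = m by omega, hshift, τ.s0, inv_one, grpOp_one]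

lemma hatSzFactor_sigmaFun_of_gt (hi : memS (n + 1) (n + 1) i) {s : ℕ}
    (hps : p ≤ s) (hs : s < n) (x : X _⦋n⦌) :
    hatSzFactor τ (n + 1) i (simpOp X (sigmaFun p) n (n + 1) x) (s + 1)
      = grpOp G (sigmaFun (Phi i (p + 1)).2) n (n + 1)
          (hatSzFactor τ n (Phi i (p + 1)).1 x s) := by
  have hq := Phi_snd_lt hi (P := p + 1) (by omega) (by omega)
  obtain ⟨m, rfl⟩ : ∃ m, n = m + s + 1 := ⟨n - s - 1, by omega⟩
  have hshift : simpOp X (· + (s + 1)) (m + s + 1 + 1) (m + 1)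
      (simpOp X (sigmaFun p) (m + s + 1) (m + s + 1 + 1) x)
      = simpOp X (· + s) (m + s + 1) (m + 1) x := by
    rw [simpOp_simpOp X (sigmaFun_mono p) add_left_mono
      (fun t ht => show t + (s + 1) ≤ m + s + 1 + 1 by omega)]
    exact simpOp_congr X
      (fun t _ => by simp only [Function.comp_apply, sigmaFun]; split_ifs <;> omega) x
  simp only [hatSzFactor]
  rw [show m + s + 1 + 1 - (s + 1 + 1) = m by omega, show m + s + 1 - (s + 1) = m by omega,
    hshift, grpOp_grpOp G (DFun_mono _ _) (sigmaFun_mono _)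
      (fun t ht => sigmaFun_le_of_le (by omega) ht)]
  exact grpOp_congr G (fun t _ => (DFun_Phi_sigmaFun_of_gt hi (by omega) (by omega)
    (show p + 1 < s + 1 + 1 by omega) t).symm) _

end Degeneracy

/-- For a twisting function `τ : X_{>0} → G`, `n ≥ 0`,
`0 ≤ p ≤ n`, `x ∈ X_n`, `i ∈ S_{n+1}` and `(j, q) = Φ(i, p+1)` one has
`hatSz_i (s_p x) = s_q (hatSz_j x)` in `(X ×_τ G)_{n+1}` (degeneracies of the
twisted Cartesian product act componentwise). -/
theorem szczarba_hatSz_degeneracy (X : SSet) (G : CategoryTheory.SimplicialObject GrpCat)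
    (τ : TwistingFn X G) (n : ℕ) (p : ℕ) (hp : p ≤ n)
    (i : List ℕ) (hi : memS (n + 1) (n + 1) i) (x : X _⦋n⦌) :
    hatSz τ (n + 1) i (simpOp X (sigmaFun p) n (n + 1) x)
      = (simpOp X (sigmaFun (Phi i (p + 1)).2) n (n + 1) (hatSz τ n (Phi i (p + 1)).1 x).1,
         grpOp G (sigmaFun (Phi i (p + 1)).2) n (n + 1) (hatSz τ n (Phi i (p + 1)).1 x).2) := by
  refine Prod.ext (hatSz_fst_sigmaFun τ hi hp x) ?_
  calc hatSzG τ (n + 1) i (simpOp X (sigmaFun p) n (n + 1) x)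
      = ((List.range (n + 1)).map
          (hatSzFactor τ (n + 1) i (simpOp X (sigmaFun p) n (n + 1) x))).prod :=
        hatSzG_eq_prod_hatSzFactor τ (n + 1) i _
    _ = ((List.range n).map (grpOp G (sigmaFun (Phi i (p + 1)).2) n (n + 1) ∘
          hatSzFactor τ n (Phi i (p + 1)).1 x)).prod :=
        prod_range_succ_eq_of_skip hp (fun r hr => hatSzFactor_sigmaFun_of_lt τ hi hp hr x)
          (hatSzFactor_sigmaFun_self τ hp x)
          (fun s hps hs => hatSzFactor_sigmaFun_of_gt τ hi hps hs x)
    _ = grpOp G (sigmaFun (Phi i (p + 1)).2) n (n + 1) (hatSzG τ n (Phi i (p + 1)).1 x) := by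
        rw [hatSzG_eq_prod_hatSzFactor, grpOp_list_prod, List.map_map]
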